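/- For every polynomial f ∈ 𝕋[x_1,…,x_n], f is equivalent to its essential part: f(a) = f^e(a) for all a ∈ 𝕋^n. -/

import Mathlib

/-- The extended tropical semiring `𝕋`: tangible reals `(a, false)`,
ghost reals `(a, true)`, and `none` = `-∞`. -/
def T : Type := Option (ℝ × Bool)

namespace T

/-- The tangible element of value `a`. -/
def tang (a : ℝ) : T := some (a, false)

/-- The ghost element `a^ν` of value `a`. -/
def ghost (a : ℝ) : T := some (a, true)

/-- Tropical addition on `𝕋`. -/
noncomputable def add : T → T → T
  | none, y => y
  | some p, none => some p
  | some (a, s), some (b, t) =>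
      if a < b then some (b, t) else if b < a then some (a, s) else some (a, true)

/-- Tropical multiplication on `𝕋`. -/
noncomputable def mul : T → T → T
  | none, _ => none
  | some _, none => none
  | some (a, s), some (b, t) => some (a + b, s || t)

lemma add_assoc' : ∀ x y z : T, add (add x y) z = add x (add y z) := by
  rintro (_ | ⟨a, s⟩) (_ | ⟨b, t⟩) (_ | ⟨c, u⟩) <;>
    (try simp only [add]) <;> (try delta T at *) <;>
    (try split_ifs) <;>
    (try simp only [add]) <;> (try delta T at *) <;>
    (try split_ifs) <;>
    first
      | rfl
      | (exfalso; linarith)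
      | (refine congrArg some ?_; refine Prod.ext ?_ ?_ <;>
          first | rfl | linarith | simp)

lemma add_comm' : ∀ x y : T, add x y = add y x := by
  rintro (_ | ⟨a, s⟩) (_ | ⟨b, t⟩) <;>
    (try simp only [add]) <;> (try delta T at *) <;>
    (try split_ifs) <;>
    first
      | rfl
      | (exfalso; linarith)
      | (refine congrArg some ?_; refine Prod.ext ?_ ?_ <;>
          first | rfl | linarith | simp)

lemma mul_assoc' : ∀ x y z : T, mul (mul x y) z = mul x (mul y z) := by
  rintro (_ | ⟨a, s⟩) (_ | ⟨b, t⟩) (_ | ⟨c, u⟩) <;>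
    simp [mul, add_assoc, Bool.or_assoc] <;> rfl

lemma mul_comm' : ∀ x y : T, mul x y = mul y x := by
  rintro (_ | ⟨a, s⟩) (_ | ⟨b, t⟩) <;> simp [mul, add_comm, Bool.or_comm] <;> rfl

lemma left_distrib' : ∀ x y z : T, mul x (add y z) = add (mul x y) (mul x z) := by
  rintro (_ | ⟨a, s⟩) (_ | ⟨b, t⟩) (_ | ⟨c, u⟩) <;>
    (try simp only [add, mul]) <;> (try delta T at *) <;>
    (try split_ifs) <;>
    (try simp only [add, mul]) <;> (try delta T at *) <;>
    (try split_ifs) <;>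
    first
      | rfl
      | (exfalso; linarith)
      | (refine congrArg some ?_; refine Prod.ext ?_ ?_ <;>
          first | rfl | linarith | simp)

noncomputable instance : Zero T := ⟨none⟩
noncomputable instance : One T := ⟨some (0, false)⟩
noncomputable instance : Add T := ⟨add⟩
noncomputable instance : Mul T := ⟨mul⟩

noncomputable instance : CommSemiring T where
  add := (· + ·)
  zero := 0
  add_assoc := add_assoc'
  zero_add := fun x => by cases x <;> rfl
  add_zero := fun x => by cases x <;> rfl
  add_comm := add_comm'
  mul := (· * ·)
  one := 1
  mul_assoc := mul_assoc'
  one_mul := fun x => by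
    show mul (some (0, false)) x = x
    rcases x with _ | ⟨a, s⟩ <;> simp [mul] <;> rfl
  mul_one := fun x => by
    show mul x (some (0, false)) = x
    rcases x with _ | ⟨a, s⟩ <;> simp [mul] <;> rfl
  mul_comm := mul_comm'
  zero_mul := fun x => by cases x <;> rfl
  mul_zero := fun x => by cases x <;> rfl
  left_distrib := left_distrib'
  right_distrib := fun x y z => by
    show mul (add x y) z = add (mul x z) (mul y z)
    rw [mul_comm', left_distrib', mul_comm' z x, mul_comm' z y]
  nsmul := nsmulRec

/-- Membership in the ghost part `𝕌̄ = 𝕌 ∪ {-∞}` of `𝕋`. -/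
def isGhost : T → Prop
  | none => True
  | some (_, s) => s = true

/-- Membership in the tangible part `ℝ ∪ {-∞}` of `𝕋`. -/
def isTangible : T → Prop
  | none => True
  | some (_, s) => s = false

/-- The underlying real value (junk value `0` at `-∞`); this is `π` on elements `≠ -∞`. -/
def val : T → ℝ
  | none => 0
  | some (a, _) => a

/-- The ghost map `ν`. -/
def nu : T → T
  | none => none
  | some (a, _) => some (a, true)

end T

namespace T

/-- The model value in the half line `[0,∞)`: `-∞ ↦ 0`, an element of value `a ↦ exp a`. -/
noncomputable def gval : T → ℝ
  | none => 0
  | some (a, _) => Real.exp a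

lemma nu_isGhost : ∀ x : T, isGhost (nu x)
  | none => trivial
  | some (_, _) => rfl

lemma gval_injOn_tang : Set.InjOn gval {x : T | isTangible x} := by
  rintro (_ | ⟨a, s⟩) hx (_ | ⟨b, t⟩) hy h <;>
    simp only [gval, Set.mem_setOf_eq, isTangible] at hx hy h
  · rfl
  · exact absurd h.symm (Real.exp_pos b).ne'
  · exact absurd h (Real.exp_pos a).ne'
  · rw [Real.exp_eq_exp] at h; subst hx; subst hy; subst h; rfl

lemma gval_injOn_ghost : Set.InjOn gval {x : T | isGhost x} := by
  rintro (_ | ⟨a, s⟩) hx (_ | ⟨b, t⟩) hy h <;>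
    simp only [gval, Set.mem_setOf_eq, isGhost] at hx hy h
  · rfl
  · exact absurd h.symm (Real.exp_pos b).ne'
  · exact absurd h (Real.exp_pos a).ne'
  · rw [Real.exp_eq_exp] at h; subst hx; subst hy; subst h; rfl

lemma gval_image_tang : gval '' {x : T | isTangible x} = Set.Ici 0 := by
  ext y
  constructor
  · rintro ⟨(_ | ⟨a, s⟩), hx, rfl⟩
    · exact Set.self_mem_Ici
    · exact le_of_lt (by simpa [gval] using Real.exp_pos a)
  · intro hy
    rcases eq_or_lt_of_le (Set.mem_Ici.mp hy : (0 : ℝ) ≤ y) with h | h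
    · exact ⟨none, trivial, h⟩
    · exact ⟨some (Real.log y, false), rfl, by simp [gval, Real.exp_log h]⟩

lemma gval_image_ghost : gval '' {x : T | isGhost x} = Set.Ici 0 := by
  ext y
  constructor
  · rintro ⟨(_ | ⟨a, s⟩), hx, rfl⟩
    · exact Set.self_mem_Ici
    · exact le_of_lt (by simpa [gval] using Real.exp_pos a)
  · intro hy
    rcases eq_or_lt_of_le (Set.mem_Ici.mp hy : (0 : ℝ) ≤ y) with h | h
    · exact ⟨none, trivial, h⟩
    · exact ⟨some (Real.log y, true), rfl, by simp [gval, Real.exp_log h]⟩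

/-- The closed sets of the topology on `𝕋`: both the tangible and the ghost layers are
closed in the model `[0,∞)` of `𝕌̄`, and the ghost image of the tangible layer is
contained in the set. -/
def TIsClosed (W : Set T) : Prop :=
  IsClosed (gval '' (W ∩ {x | isTangible x})) ∧
  IsClosed (gval '' (W ∩ {x | isGhost x})) ∧
  nu '' (W ∩ {x | isTangible x}) ⊆ W ∩ {x | isGhost x}

/-- The topology on `𝕋`. -/
noncomputable instance : TopologicalSpace T :=
  TopologicalSpace.ofClosed {W | TIsClosed W}
    (by
      refine ⟨?_, ?_, ?_⟩ <;> simp [TIsClosed])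
    (fun A hA => by
      rcases A.eq_empty_or_nonempty with rfl | hne
      · rw [Set.sInter_empty]
        refine ⟨?_, ?_, ?_⟩
        · rw [Set.univ_inter, gval_image_tang]; exact isClosed_Ici
        · rw [Set.univ_inter, gval_image_ghost]; exact isClosed_Ici
        · rintro y ⟨x, ⟨-, _⟩, rfl⟩
          exact ⟨trivial, nu_isGhost x⟩
      · have : Nonempty A := hne.to_subtype
        have h1 : (⋂₀ A) ∩ {x : T | isTangible x}
            = ⋂ (W : A), ((W : Set T) ∩ {x | isTangible x}) := by
          ext x
          simp only [Set.mem_inter_iff, Set.mem_sInter, Set.mem_iInter, Set.mem_setOf_eq]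
          constructor
          · rintro ⟨h, ht⟩ W; exact ⟨h W W.2, ht⟩
          · intro h
            obtain ⟨W, hW⟩ := hne
            exact ⟨fun V hV => (h ⟨V, hV⟩).1, (h ⟨W, hW⟩).2⟩
        have h2 : (⋂₀ A) ∩ {x : T | isGhost x}
            = ⋂ (W : A), ((W : Set T) ∩ {x | isGhost x}) := by
          ext x
          simp only [Set.mem_inter_iff, Set.mem_sInter, Set.mem_iInter, Set.mem_setOf_eq]
          constructor
          · rintro ⟨h, ht⟩ W; exact ⟨h W W.2, ht⟩
          · intro h
            obtain ⟨W, hW⟩ := hne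
            exact ⟨fun V hV => (h ⟨V, hV⟩).1, (h ⟨W, hW⟩).2⟩
        refine ⟨?_, ?_, ?_⟩
        · rw [h1, Set.InjOn.image_iInter_eq
            (gval_injOn_tang.mono (Set.iUnion_subset fun W => Set.inter_subset_right))]
          exact isClosed_iInter fun W => (hA W.2).1
        · rw [h2, Set.InjOn.image_iInter_eq
            (gval_injOn_ghost.mono (Set.iUnion_subset fun W => Set.inter_subset_right))]
          exact isClosed_iInter fun W => (hA W.2).2.1
        · rintro y ⟨x, ⟨hx, hxt⟩, rfl⟩
          refine ⟨fun W hW => ((hA hW).2.2 ⟨x, ⟨hx W hW, hxt⟩, rfl⟩).1, nu_isGhost x⟩)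
    (fun A hA B hB => by
      have h1 : (A ∪ B) ∩ {x : T | isTangible x}
          = (A ∩ {x | isTangible x}) ∪ (B ∩ {x | isTangible x}) :=
        Set.union_inter_distrib_right A B _
      have h2 : (A ∪ B) ∩ {x : T | isGhost x}
          = (A ∩ {x | isGhost x}) ∪ (B ∩ {x | isGhost x}) :=
        Set.union_inter_distrib_right A B _
      refine ⟨?_, ?_, ?_⟩
      · rw [h1, Set.image_union]; exact hA.1.union hB.1
      · rw [h2, Set.image_union]; exact hA.2.1.union hB.2.1
      · rintro y ⟨x, ⟨hx, hxt⟩, rfl⟩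
        rcases hx with hxA | hxB
        · have h := hA.2.2 ⟨x, ⟨hxA, hxt⟩, rfl⟩
          exact ⟨Or.inl h.1, h.2⟩
        · have h := hB.2.2 ⟨x, ⟨hxB, hxt⟩, rfl⟩
          exact ⟨Or.inr h.1, h.2⟩)

end T

namespace T

/-- `f` dominates `g` if `f ⊕ g` and `f` agree as functions. -/
def Dominates {n : ℕ} (f g : MvPolynomial (Fin n) T) : Prop :=
  ∀ a : Fin n → T, MvPolynomial.eval a f + MvPolynomial.eval a g = MvPolynomial.eval a f

/-- The polynomial obtained from `f` by deleting the monomial with exponent `i`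
(setting its coefficient to `-∞`). -/
noncomputable def removeMono {n : ℕ} (i : Fin n →₀ ℕ) (f : MvPolynomial (Fin n) T) :
    MvPolynomial (Fin n) T :=
  ∑ j ∈ f.support.erase i, MvPolynomial.monomial j (MvPolynomial.coeff j f)

/-- The monomial of `f` with exponent `i` is essential. -/
def Essential {n : ℕ} (f : MvPolynomial (Fin n) T) (i : Fin n →₀ ℕ) : Prop :=
  i ∈ f.support ∧
    ¬ Dominates (removeMono i f) (MvPolynomial.monomial i (MvPolynomial.coeff i f))

open Classical in
/-- The essential part `f^e` of `f`: the sum of the essential monomials of `f`. -/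
noncomputable def essentialPart {n : ℕ} (f : MvPolynomial (Fin n) T) :
    MvPolynomial (Fin n) T :=
  ∑ i ∈ f.support,
    if Essential f i then MvPolynomial.monomial i (MvPolynomial.coeff i f) else 0

end T

/-!
At a point `a`, a tropical sum is decided by its summands of largest size: it is the unique
such summand if there is one, and the ghost of their common value otherwise. So it suffices to
see that among the dominant terms of `f` at `a` some are essential, and at least two are when
there are at least two dominant terms. A term that is the unique dominant one at some point is
essential. Moving `a` in a tangible direction `w` multiplies the term with exponent `j` by
`exp (ε * ⟨w, j⟩)`, so for small `ε > 0` the new dominant terms are the old ones of largest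
`w`-weight. Choosing `w` to separate two dominant exponents shrinks the set of dominant terms,
and induction on its size yields an essential one; doing this along `w` and along `-w` yields
two different essential dominant terms.
-/

open MvPolynomial Filter Topology

namespace T

lemma gval_nonneg (x : T) : 0 ≤ gval x := by
  rcases x with _ | ⟨a, s⟩
  exacts [le_rfl, (Real.exp_pos a).le]

lemma gval_pos_iff {x : T} : 0 < gval x ↔ x ≠ 0 := by
  rcases x with _ | ⟨a, s⟩
  exacts [iff_of_false (lt_irrefl 0) (not_not.2 rfl),
    iff_of_true (Real.exp_pos a) (Option.some_ne_none _)]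

lemma gval_mul (x y : T) : gval (x * y) = gval x * gval y := by
  show gval (T.mul x y) = _
  rcases x with _ | ⟨a, s⟩ <;> rcases y with _ | ⟨b, t⟩ <;> simp [T.mul, gval, Real.exp_add]

lemma gval_add (x y : T) : gval (x + y) = max (gval x) (gval y) := by
  show gval (T.add x y) = _
  rcases x with _ | ⟨a, s⟩ <;> rcases y with _ | ⟨b, t⟩
  · simp [T.add, gval]
  · simp [T.add, gval, (Real.exp_pos b).le]
  · simp [T.add, gval, (Real.exp_pos a).le]
  · rcases lt_trichotomy a b with h | rfl | h
    · simp [T.add, gval, h, (Real.exp_lt_exp.2 h).le]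
    · simp [T.add, gval]
    · simp [T.add, gval, h, not_lt.2 h.le, (Real.exp_lt_exp.2 h).le]

noncomputable def gvalHom : T →* ℝ where
  toFun := gval
  map_one' := Real.exp_zero
  map_mul' := gval_mul

lemma gval_tang (r : ℝ) : gval (tang r) = Real.exp r := rfl

lemma add_eq_left_of_gval_lt {x y : T} (h : gval y < gval x) : x + y = x := by
  rcases x with _ | ⟨a, s⟩ <;> rcases y with _ | ⟨b, t⟩
  · exact absurd h (lt_irrefl 0)
  · exact absurd h (not_lt.2 (gval_nonneg _))
  · rfl
  · have hba : b < a := Real.exp_lt_exp.1 h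
    show T.add _ _ = _
    simp only [T.add]
    exact (if_neg (not_lt.2 hba.le)).trans (if_pos hba)

lemma add_eq_nu_of_gval_eq {x y : T} (h : gval x = gval y) : x + y = nu x := by
  rcases x with _ | ⟨a, s⟩ <;> rcases y with _ | ⟨b, t⟩
  · rfl
  · exact absurd h (Real.exp_pos b).ne
  · exact absurd h (Real.exp_pos a).ne'
  · obtain rfl : a = b := Real.exp_injective h
    show T.add _ _ = _
    simp only [T.add, lt_irrefl]
    rfl

end T

namespace Finset

variable {ι : Type*} {s t : Finset ι} {φ ψ : ι → ℝ} {i j : ι}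

noncomputable def maximizers (s : Finset ι) (φ : ι → ℝ) : Finset ι :=
  s.filter fun j => ∀ i ∈ s, φ i ≤ φ j

lemma mem_maximizers : j ∈ s.maximizers φ ↔ j ∈ s ∧ ∀ i ∈ s, φ i ≤ φ j :=
  mem_filter

lemma maximizers_subset : s.maximizers φ ⊆ s := filter_subset _ _

lemma Nonempty.maximizers (hs : s.Nonempty) : (s.maximizers φ).Nonempty :=
  let ⟨j, hj, hmax⟩ := s.exists_max_image φ hs
  ⟨j, mem_maximizers.2 ⟨hj, hmax⟩⟩

lemma eq_of_mem_maximizers (hi : i ∈ s.maximizers φ) (hj : j ∈ s.maximizers φ) :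
    φ i = φ j :=
  le_antisymm ((mem_maximizers.1 hj).2 i (mem_maximizers.1 hi).1)
    ((mem_maximizers.1 hi).2 j (mem_maximizers.1 hj).1)

lemma lt_of_not_mem_maximizers (hi : i ∈ s) (hi' : i ∉ s.maximizers φ)
    (hj : j ∈ s.maximizers φ) : φ i < φ j := by
  obtain ⟨k, hk, hik⟩ : ∃ k ∈ s, φ i < φ k := by
    by_contra! h
    exact hi' (mem_maximizers.2 ⟨hi, h⟩)
  exact hik.trans_le ((mem_maximizers.1 hj).2 k hk)

lemma maximizers_eq_of_lt (hts : t ⊆ s) (hj : j ∈ t) (heq : ∀ i ∈ t, φ i = φ j)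
    (hlt : ∀ i ∈ s, i ∉ t → φ i < φ j) : s.maximizers φ = t := by
  ext i
  refine ⟨fun hi => ?_, fun hi => mem_maximizers.2 ⟨hts hi, fun k hk => ?_⟩⟩
  · by_contra hit
    exact (hlt i (maximizers_subset hi) hit).not_ge ((mem_maximizers.1 hi).2 j (hts hj))
  · rw [heq i hi]
    by_cases hkt : k ∈ t
    exacts [(heq k hkt).le, (hlt k hk hkt).le]

lemma maximizers_filter {p : ι → Prop} [DecidablePred p] (h : ∃ j ∈ s.maximizers φ, p j) :
    (s.filter p).maximizers φ = (s.maximizers φ).filter p := by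
  obtain ⟨j, hj, hpj⟩ := h
  refine maximizers_eq_of_lt (filter_subset_filter _ maximizers_subset) (mem_filter.2 ⟨hj, hpj⟩)
    (fun i hi => eq_of_mem_maximizers (mem_filter.1 hi).1 hj) fun i hi hi' => ?_
  rw [mem_filter] at hi hi'
  exact lt_of_not_mem_maximizers hi.1 (fun h => hi' ⟨h, hi.2⟩) hj

lemma eventually_maximizers_mul_exp (h : ∃ j ∈ s, 0 < φ j) :
    ∀ᶠ ε in 𝓝[>] 0, s.maximizers (fun i => φ i * Real.exp (ε * ψ i)) =
      (s.maximizers φ).maximizers ψ := by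
  obtain ⟨j₀, hj₀, hφj₀⟩ := h
  set M := s.maximizers φ
  have hs : s.Nonempty := ⟨j₀, hj₀⟩
  obtain ⟨m, hm⟩ := (hs.maximizers (φ := φ)).maximizers (φ := ψ)
  have hmM : m ∈ M := maximizers_subset hm
  have hV : 0 < φ m := hφj₀.trans_le ((mem_maximizers.1 hmM).2 j₀ hj₀)
  have hout : ∀ᶠ ε in 𝓝 0, ∀ i ∈ s, i ∉ M →
      φ i * Real.exp (ε * ψ i) < φ m * Real.exp (ε * ψ m) := by
    refine (eventually_all_finset s).2 fun i hi => ?_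
    by_cases hiM : i ∈ M
    · exact .of_forall fun _ h => absurd hiM h
    have hlt : φ i < φ m := lt_of_not_mem_maximizers hi hiM hmM
    exact (ContinuousAt.eventually_lt (by fun_prop) (by fun_prop) (by simpa using hlt)).mono
      fun _ h _ => h
  filter_upwards [nhdsWithin_le_nhds hout, self_mem_nhdsWithin] with ε hε (hεpos : 0 < ε)
  refine maximizers_eq_of_lt (maximizers_subset.trans maximizers_subset) hm
    (fun i hi => ?_) fun i hi hiM => ?_
  · rw [eq_of_mem_maximizers (maximizers_subset hi) hmM, eq_of_mem_maximizers hi hm]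
  by_cases hiM' : i ∈ M
  · rw [eq_of_mem_maximizers hiM' hmM]
    have := lt_of_not_mem_maximizers hiM' hiM hm
    gcongr
  · exact hε i hi hiM'

end Finset

namespace T

section Sums

variable {ι : Type*} {s : Finset ι} {g : ι → T} {V : ℝ}

lemma gval_sum_le (hV : 0 ≤ V) (h : ∀ i ∈ s, gval (g i) ≤ V) :
    gval (∑ i ∈ s, g i) ≤ V :=
  Finset.sum_induction g (fun x => gval x ≤ V)
    (fun x y hx hy => by rw [gval_add]; exact max_le hx hy) hV h

lemma gval_sum_lt (hV : 0 < V) (h : ∀ i ∈ s, gval (g i) < V) : gval (∑ i ∈ s, g i) < V :=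
  Finset.sum_induction g (fun x => gval x < V)
    (fun x y hx hy => by rw [gval_add]; exact max_lt hx hy) hV h

lemma gval_le_gval_sum [DecidableEq ι] {j : ι} (hj : j ∈ s) :
    gval (g j) ≤ gval (∑ i ∈ s, g i) := by
  rw [← Finset.add_sum_erase s g hj, gval_add]
  exact le_max_left _ _

variable [DecidableEq ι]

lemma sum_eq_sum_maximizers :
    ∑ i ∈ s, g i = ∑ i ∈ s.maximizers (fun i => gval (g i)), g i := by
  set M := s.maximizers (fun i => gval (g i))
  rw [← Finset.sum_sdiff (Finset.maximizers_subset (s := s)), add_comm]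
  rcases (s \ M).eq_empty_or_nonempty with hempty | ⟨i₀, hi₀⟩
  · rw [hempty, Finset.sum_empty, add_zero]
  obtain ⟨j, hj⟩ := Finset.Nonempty.maximizers (φ := fun i => gval (g i))
    ⟨i₀, (Finset.mem_sdiff.1 hi₀).1⟩
  have hlt : ∀ i ∈ s \ M, gval (g i) < gval (g j) := fun i hi =>
    Finset.lt_of_not_mem_maximizers (φ := fun i => gval (g i)) (Finset.mem_sdiff.1 hi).1
      (Finset.mem_sdiff.1 hi).2 hj
  refine add_eq_left_of_gval_lt ((gval_sum_lt ?_ hlt).trans_le (gval_le_gval_sum hj))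
  exact (gval_nonneg _).trans_lt (hlt i₀ hi₀)

lemma sum_eq_nu_of_gval_eq (hs : s.Nontrivial) {j : ι} (hj : j ∈ s)
    (h : ∀ i ∈ s, gval (g i) = gval (g j)) : ∑ i ∈ s, g i = nu (g j) := by
  obtain ⟨k, hk, hkj⟩ := hs.exists_ne j
  have hk' : k ∈ s.erase j := Finset.mem_erase.2 ⟨hkj, hk⟩
  have hrest : gval (∑ i ∈ s.erase j, g i) = gval (g j) :=
    le_antisymm (gval_sum_le (gval_nonneg _) fun i hi => (h i (Finset.mem_of_mem_erase hi)).le)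
      ((h k hk).symm.trans_le (gval_le_gval_sum hk'))
  rw [← Finset.add_sum_erase s g hj, add_eq_nu_of_gval_eq hrest.symm]

end Sums

variable {n : ℕ} {f : MvPolynomial (Fin n) T} {a : Fin n → T}

noncomputable def termVal (f : MvPolynomial (Fin n) T) (a : Fin n → T) (j : Fin n →₀ ℕ) :
    T :=
  eval a (monomial j (coeff j f))

lemma eval_eq_sum_termVal (f : MvPolynomial (Fin n) T) (a : Fin n → T) :
    eval a f = ∑ j ∈ f.support, termVal f a j := by
  conv_lhs => rw [← support_sum_monomial_coeff f]
  exact map_sum _ _ _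

lemma eval_removeMono (f : MvPolynomial (Fin n) T) (a : Fin n → T) (i : Fin n →₀ ℕ) :
    eval a (removeMono i f) = ∑ j ∈ f.support.erase i, termVal f a j :=
  map_sum _ _ _

open Classical in
lemma eval_essentialPart (f : MvPolynomial (Fin n) T) (a : Fin n → T) :
    eval a (essentialPart f) = ∑ j ∈ f.support.filter (Essential f), termVal f a j := by
  rw [essentialPart, map_sum, Finset.sum_filter]
  refine Finset.sum_congr rfl fun j _ => ?_
  split_ifs
  exacts [rfl, map_zero _]

noncomputable def dominantTerms (f : MvPolynomial (Fin n) T) (a : Fin n → T) :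
    Finset (Fin n →₀ ℕ) :=
  f.support.maximizers fun j => gval (termVal f a j)

lemma gval_termVal (f : MvPolynomial (Fin n) T) (a : Fin n → T) (j : Fin n →₀ ℕ) :
    gval (termVal f a j) = gval (coeff j f) * j.prod fun k e => gval (a k) ^ e := by
  rw [termVal, eval_monomial, gval_mul]
  change _ * gvalHom _ = _ * j.prod fun k e => gvalHom (a k) ^ e
  simp_rw [map_finsuppProd, map_pow]

noncomputable def shift (a : Fin n → T) (w : Fin n → ℝ) (ε : ℝ) : Fin n → T :=
  fun k => a k * tang (ε * w k)

lemma gval_termVal_shift (f : MvPolynomial (Fin n) T) (a : Fin n → T) (w : Fin n → ℝ)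
    (ε : ℝ) (j : Fin n →₀ ℕ) :
    gval (termVal f (shift a w ε) j) =
      gval (termVal f a j) * Real.exp (ε * Finsupp.weight w j) := by
  simp only [gval_termVal, shift, gval_mul, gval_tang, mul_pow, Finsupp.prod_mul, mul_assoc]
  rw [Finsupp.weight_apply, Finsupp.mul_sum, Finsupp.sum, Real.exp_sum, Finsupp.prod]
  refine congrArg _ (congrArg _ (Finset.prod_congr rfl fun k _ => ?_))
  show Real.exp (ε * w k) ^ j k = _
  rw [← Real.exp_nat_mul, nsmul_eq_mul]
  ring_nf

lemma exists_dominantTerms_eq_maximizers_weight (h : ∃ j ∈ f.support, termVal f a j ≠ 0)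
    (w : Fin n → ℝ) :
    ∃ a' : Fin n → T, (∃ j ∈ f.support, termVal f a' j ≠ 0) ∧
      dominantTerms f a' = (dominantTerms f a).maximizers (Finsupp.weight w) := by
  obtain ⟨j, hj, hj0⟩ := h
  have hev := Finset.eventually_maximizers_mul_exp (s := f.support)
    (φ := fun j => gval (termVal f a j)) (ψ := Finsupp.weight w) ⟨j, hj, gval_pos_iff.2 hj0⟩
  obtain ⟨ε, hε⟩ := hev.exists
  refine ⟨shift a w ε, ⟨j, hj, gval_pos_iff.1 ?_⟩, ?_⟩
  · rw [gval_termVal_shift]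
    exact mul_pos (gval_pos_iff.2 hj0) (Real.exp_pos _)
  · simpa only [dominantTerms, gval_termVal_shift] using hε

lemma essential_of_dominantTerms_eq_singleton {j : Fin n →₀ ℕ} (hJ : dominantTerms f a = {j})
    (hj0 : termVal f a j ≠ 0) : Essential f j := by
  have hj : j ∈ dominantTerms f a := hJ ▸ Finset.mem_singleton_self j
  have hlt : gval (eval a (removeMono j f)) < gval (termVal f a j) := by
    rw [eval_removeMono]
    refine gval_sum_lt (gval_pos_iff.2 hj0) fun i hi => ?_
    refine Finset.lt_of_not_mem_maximizers (φ := fun i => gval (termVal f a i))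
      (Finset.mem_of_mem_erase hi) ?_ hj
    change i ∉ dominantTerms f a
    rw [hJ, Finset.mem_singleton]
    exact (Finset.mem_erase.1 hi).1
  refine ⟨Finset.maximizers_subset hj, fun hdom => ?_⟩
  have h := hdom a
  change eval a (removeMono j f) + termVal f a j = _ at h
  rw [add_comm, add_eq_left_of_gval_lt hlt] at h
  exact (h ▸ hlt).false

lemma exists_weight_ne {j₀ j₁ : Fin n →₀ ℕ} (h : j₀ ≠ j₁) :
    ∃ w : Fin n → ℝ, Finsupp.weight w j₀ ≠ Finsupp.weight w j₁ := by
  obtain ⟨k, hk⟩ := Finsupp.ne_iff.1 h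
  refine ⟨Pi.single k 1, ?_⟩
  rwa [Finsupp.weight_single_index, Finsupp.weight_single_index, nsmul_one, nsmul_one, Ne,
    Nat.cast_inj]

theorem exists_essential_mem_dominantTerms (h : ∃ j ∈ f.support, termVal f a j ≠ 0) :
    ∃ j ∈ dominantTerms f a, Essential f j := by
  induction hc : (dominantTerms f a).card using Nat.strong_induction_on generalizing a with
  | _ c ih =>
  obtain ⟨j₀, hj₀S, hj₀⟩ := h
  obtain ⟨j, hj⟩ : (dominantTerms f a).Nonempty := Finset.Nonempty.maximizers ⟨j₀, hj₀S⟩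
  rcases Finset.eq_singleton_or_nontrivial hj with hJ | hJ
  · refine ⟨j, hj, essential_of_dominantTerms_eq_singleton hJ (gval_pos_iff.1 ?_)⟩
    exact (gval_pos_iff.2 hj₀).trans_le ((Finset.mem_maximizers.1 hj).2 j₀ hj₀S)
  obtain ⟨i, hi, hij⟩ := hJ.exists_ne j
  obtain ⟨w, hw⟩ := exists_weight_ne hij
  obtain ⟨a', h', ha'⟩ := exists_dominantTerms_eq_maximizers_weight ⟨j₀, hj₀S, hj₀⟩ w
  -- `i` and `j` have different `w`-weights, so they cannot both survive the shift
  have hssub : dominantTerms f a' ⊂ dominantTerms f a := by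
    rw [ha']
    refine Finset.ssubset_iff_subset_ne.2 ⟨Finset.maximizers_subset, fun heq => hw ?_⟩
    exact Finset.eq_of_mem_maximizers (by rwa [heq]) (by rwa [heq])
  obtain ⟨e, he, hess⟩ := ih _ (hc ▸ Finset.card_lt_card hssub) h' rfl
  exact ⟨e, hssub.subset he, hess⟩

-- The essential dominant terms found by shifting along `w` and along `-w` differ because `w`
-- separates two dominant exponents.
open Classical in
theorem nontrivial_filter_essential_dominantTerms (h : ∃ j ∈ f.support, termVal f a j ≠ 0)
    (hJ : (dominantTerms f a).Nontrivial) :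
    ((dominantTerms f a).filter (Essential f)).Nontrivial := by
  obtain ⟨j₀, hj₀, j₁, hj₁, hne⟩ := hJ
  obtain ⟨w, hw⟩ := exists_weight_ne hne
  have hmax : ∀ w' : Fin n → ℝ,
      ∃ e ∈ (dominantTerms f a).maximizers (Finsupp.weight w'), Essential f e := fun w' => by
    obtain ⟨a', h', ha'⟩ := exists_dominantTerms_eq_maximizers_weight h w'
    exact ha' ▸ exists_essential_mem_dominantTerms h'
  obtain ⟨e₀, he₀, hess₀⟩ := hmax w
  obtain ⟨e₁, he₁, hess₁⟩ := hmax (-w)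
  refine ⟨e₀, Finset.mem_filter.2 ⟨Finset.maximizers_subset he₀, hess₀⟩,
    e₁, Finset.mem_filter.2 ⟨Finset.maximizers_subset he₁, hess₁⟩, fun heq => hw ?_⟩
  subst heq
  have hneg : ∀ j : Fin n →₀ ℕ, Finsupp.weight (-w) j = -Finsupp.weight w j := fun j => by
    simp [Finsupp.weight_eq_sum]
  have hup := (Finset.mem_maximizers.1 he₀).2
  have hdown := (Finset.mem_maximizers.1 he₁).2
  simp only [hneg, neg_le_neg_iff] at hdown
  linarith [hup j₀ hj₀, hup j₁ hj₁, hdown j₀ hj₀, hdown j₁ hj₁]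

end T

open T in
/-- every polynomial is equivalent to its essential part. -/
theorem tropical_equiv_essentialPart (n : ℕ) (f : MvPolynomial (Fin n) T) :
    ∀ a : Fin n → T, MvPolynomial.eval a f = MvPolynomial.eval a (T.essentialPart f) := by
  classical
  intro a
  rw [eval_eq_sum_termVal, eval_essentialPart]
  by_cases h0 : ∃ j ∈ f.support, termVal f a j ≠ 0
  swap
  · simp only [not_exists, not_and, not_not] at h0
    rw [Finset.sum_eq_zero h0, Finset.sum_eq_zero fun j hj => h0 j (Finset.filter_subset _ _ hj)]
  obtain ⟨e, he, hess⟩ := exists_essential_mem_dominantTerms h0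
  rw [sum_eq_sum_maximizers, sum_eq_sum_maximizers (s := f.support.filter _),
    Finset.maximizers_filter ⟨e, he, hess⟩]
  change ∑ j ∈ dominantTerms f a, _ = ∑ j ∈ (dominantTerms f a).filter _, _
  rcases Finset.eq_singleton_or_nontrivial he with hJ | hJ
  · rw [hJ, Finset.filter_singleton, if_pos hess]
  have hconst : ∀ i ∈ dominantTerms f a, gval (termVal f a i) = gval (termVal f a e) :=
    fun i hi => Finset.eq_of_mem_maximizers (φ := fun i => gval (termVal f a i)) hi he
  rw [sum_eq_nu_of_gval_eq hJ he hconst,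
    sum_eq_nu_of_gval_eq (nontrivial_filter_essential_dominantTerms h0 hJ)
      (Finset.mem_filter.2 ⟨he, hess⟩) fun i hi => hconst i (Finset.filter_subset _ _ hi)]
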